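/- (Proposition 6.1 (ii), local form: integrability equations.) The family {e_1', …, e_p'} of complex vector fields on U is involutive if and only if for all 1 ≤ i, j ≤ p both of the following hold: Σ_l ((e_j·ω_{il}) − (e_i·ω_{jl})) ē_l + [Σ_l ω_{il} ē_l, Σ_l ω_{jl} ē_l] = 0 (formula (6.2)), and Σ_k ω_{ik} [e_j, ē_k] = Σ_k ω_{jk} [e_i, ē_k] (formula (6.4)). -/

import Mathlib

noncomputable section
open Complex ComplexConjugate

/-- The model space `ℂ^p × ℝ^d` with foliated coordinates `(z, t)`. -/
abbrev Mdl (p d : ℕ) := (Fin p → ℂ) × (Fin d → ℝ)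

/-- A complexified tangent vector, written in the frame
`∂/∂z_i, ∂/∂z̄_i, ∂/∂t_l`: the three components are the coefficients on
`∂/∂z`, on `∂/∂z̄` and on `∂/∂t` respectively. -/
abbrev CVec (p d : ℕ) := (Fin p → ℂ) × (Fin p → ℂ) × (Fin d → ℂ)

/-- A complex vector field on (an open subset of) `ℂ^p × ℝ^d`. -/
abbrev CVF (p d : ℕ) := Mdl p d → CVec p d

variable {p d : ℕ}

/-- `∂φ/∂z_i = ½(∂φ/∂x_i − i ∂φ/∂y_i)`, via the ℂ-linear extension of the real
Fréchet derivative. -/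
def pdz (i : Fin p) (φ : Mdl p d → ℂ) (u : Mdl p d) : ℂ :=
  (1/2 : ℂ) * (fderiv ℝ φ u (Pi.single i 1, 0)
    - Complex.I * fderiv ℝ φ u (Pi.single i Complex.I, 0))

/-- `∂φ/∂z̄_i = ½(∂φ/∂x_i + i ∂φ/∂y_i)`. -/
def pdzbar (i : Fin p) (φ : Mdl p d → ℂ) (u : Mdl p d) : ℂ :=
  (1/2 : ℂ) * (fderiv ℝ φ u (Pi.single i 1, 0)
    + Complex.I * fderiv ℝ φ u (Pi.single i Complex.I, 0))

/-- `∂φ/∂t_l`. -/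
def pdt (l : Fin d) (φ : Mdl p d → ℂ) (u : Mdl p d) : ℂ :=
  fderiv ℝ φ u (0, Pi.single l 1)

/-- Derivative of a scalar function `φ` at `u` along a complexified tangent
vector `v` (the ℂ-linear extension of the real Fréchet derivative of `φ` at `u`,
applied to `v`). -/
def derivVec (v : CVec p d) (φ : Mdl p d → ℂ) (u : Mdl p d) : ℂ :=
  (∑ i, v.1 i * pdz i φ u) + (∑ i, v.2.1 i * pdzbar i φ u)
    + (∑ l, v.2.2 l * pdt l φ u)

/-- Derivative of `φ` along the complex vector field `X`: `(X·φ)(u)`. -/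
def derivAlong (X : CVF p d) (φ : Mdl p d → ℂ) (u : Mdl p d) : ℂ :=
  derivVec (X u) φ u

/-- Lie bracket of complex vector fields:
`[X, Y](u) = (D_u Y)(X(u)) − (D_u X)(Y(u))`, computed componentwise in the frame
`∂/∂z_i, ∂/∂z̄_i, ∂/∂t_l`. -/
def bracket (X Y : CVF p d) : CVF p d := fun u =>
  (fun j => derivAlong X (fun v => (Y v).1 j) u - derivAlong Y (fun v => (X v).1 j) u,
   fun j => derivAlong X (fun v => (Y v).2.1 j) u - derivAlong Y (fun v => (X v).2.1 j) u,
   fun l => derivAlong X (fun v => (Y v).2.2 l) u - derivAlong Y (fun v => (X v).2.2 l) u)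

/-- The canonical frame `e_i = ∂/∂z̄_i + Σ_l a_i^l ∂/∂t_l` (formula (3.13)). -/
def eFrame (a : Fin p → Fin d → Mdl p d → ℂ) (i : Fin p) : CVF p d :=
  fun u => (0, Pi.single i 1, fun l => a i l u)

/-- The conjugate frame `ē_i = ∂/∂z_i + Σ_l conj(a_i^l) ∂/∂t_l`. -/
def eBarFrame (a : Fin p → Fin d → Mdl p d → ℂ) (i : Fin p) : CVF p d :=
  fun u => (Pi.single i 1, 0, fun l => conj (a i l u))

/-- The coordinate vector field `∂/∂t_l`. -/
def dtField (l : Fin d) : CVF p d := fun _ => (0, 0, Pi.single l 1)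

/-- A finite family of complex vector fields is involutive on `U` if the bracket
of any two members lies, at every point of `U`, in the pointwise ℂ-linear span
of the family. -/
def InvolutiveOn {ι : Type*} (F : ι → CVF p d) (U : Set (Mdl p d)) : Prop :=
  ∀ i j, ∀ u ∈ U,
    bracket (F i) (F j) u ∈ Submodule.span ℂ (Set.range fun k => F k u)

/-- The deformation at constant type coded by `ω`:
`e_i' = e_i − Σ_j ω_{ij} ē_j`. -/
def defCT (a : Fin p → Fin d → Mdl p d → ℂ) (ω : Fin p → Fin p → Mdl p d → ℂ)
    (i : Fin p) : CVF p d :=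
  fun u => eFrame a i u - ∑ j, ω i j u • eBarFrame a j u

/-! ### Auxiliary calculus lemmas -/

section Aux
variable {p d : ℕ}

/-- Evaluation of a continuous real-linear map to `ℂ` at a point, as a
`ℂ`-linear map. -/
def evalL (w : Mdl p d) : (Mdl p d →L[ℝ] ℂ) →ₗ[ℂ] ℂ where
  toFun T := T w
  map_add' _ _ := rfl
  map_smul' _ _ := rfl

/-- `derivVec` as a `ℂ`-linear functional of the Fréchet derivative. -/
def dvL (v : CVec p d) : (Mdl p d →L[ℝ] ℂ) →ₗ[ℂ] ℂ :=
  (∑ i, v.1 i • ((1/2 : ℂ) • (evalL (Pi.single i 1, 0)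
      - Complex.I • evalL (Pi.single i Complex.I, 0))))
  + (∑ i, v.2.1 i • ((1/2 : ℂ) • (evalL (Pi.single i 1, 0)
      + Complex.I • evalL (Pi.single i Complex.I, 0))))
  + (∑ l, v.2.2 l • evalL (0, Pi.single l 1))

lemma derivVec_eq_dvL (v : CVec p d) (φ : Mdl p d → ℂ) (u : Mdl p d) :
    derivVec v φ u = dvL v (fderiv ℝ φ u) := by
  simp only [derivVec, dvL, LinearMap.add_apply, LinearMap.sum_apply, LinearMap.smul_apply,
    LinearMap.sub_apply, smul_eq_mul, evalL, LinearMap.coe_mk, AddHom.coe_mk, pdz, pdzbar, pdt]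

lemma derivVec_const (v : CVec p d) (c : ℂ) (u : Mdl p d) :
    derivVec v (fun _ => c) u = 0 := by
  rw [derivVec_eq_dvL, fderiv_const_apply]
  simp

lemma derivVec_add (v : CVec p d) {φ ψ : Mdl p d → ℂ} {u : Mdl p d}
    (hφ : DifferentiableAt ℝ φ u) (hψ : DifferentiableAt ℝ ψ u) :
    derivVec v (fun x => φ x + ψ x) u = derivVec v φ u + derivVec v ψ u := by
  rw [derivVec_eq_dvL, fderiv_fun_add hφ hψ, map_add, derivVec_eq_dvL, derivVec_eq_dvL]

lemma derivVec_neg (v : CVec p d) (φ : Mdl p d → ℂ) (u : Mdl p d) :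
    derivVec v (fun x => -φ x) u = -derivVec v φ u := by
  rw [derivVec_eq_dvL, fderiv_fun_neg, map_neg, derivVec_eq_dvL]

lemma derivVec_sub (v : CVec p d) {φ ψ : Mdl p d → ℂ} {u : Mdl p d}
    (hφ : DifferentiableAt ℝ φ u) (hψ : DifferentiableAt ℝ ψ u) :
    derivVec v (fun x => φ x - ψ x) u = derivVec v φ u - derivVec v ψ u := by
  rw [derivVec_eq_dvL, fderiv_fun_sub hφ hψ, map_sub, derivVec_eq_dvL, derivVec_eq_dvL]

lemma derivVec_mul (v : CVec p d) {φ ψ : Mdl p d → ℂ} {u : Mdl p d}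
    (hφ : DifferentiableAt ℝ φ u) (hψ : DifferentiableAt ℝ ψ u) :
    derivVec v (fun x => φ x * ψ x) u
      = φ u * derivVec v ψ u + ψ u * derivVec v φ u := by
  rw [derivVec_eq_dvL, fderiv_fun_mul hφ hψ, map_add, map_smul, map_smul,
    derivVec_eq_dvL, derivVec_eq_dvL]
  simp [smul_eq_mul]

lemma derivVec_fsum (v : CVec p d) {ι : Type*} (s : Finset ι)
    {φ : ι → Mdl p d → ℂ} {u : Mdl p d}
    (h : ∀ l ∈ s, DifferentiableAt ℝ (φ l) u) :
    derivVec v (fun x => ∑ l ∈ s, φ l x) u = ∑ l ∈ s, derivVec v (φ l) u := by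
  rw [derivVec_eq_dvL, fderiv_fun_sum h, map_sum]
  exact Finset.sum_congr rfl fun l _ => (derivVec_eq_dvL _ _ _).symm

lemma derivVec_add_vec (v w : CVec p d) (φ : Mdl p d → ℂ) (u : Mdl p d) :
    derivVec (v + w) φ u = derivVec v φ u + derivVec w φ u := by
  simp only [derivVec, Prod.fst_add, Prod.snd_add, Pi.add_apply, add_mul,
    Finset.sum_add_distrib]
  ring

lemma derivVec_sub_vec (v w : CVec p d) (φ : Mdl p d → ℂ) (u : Mdl p d) :
    derivVec (v - w) φ u = derivVec v φ u - derivVec w φ u := by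
  simp only [derivVec, Prod.fst_sub, Prod.snd_sub, Pi.sub_apply, sub_mul,
    Finset.sum_sub_distrib]
  ring

lemma derivVec_smul_vec (c : ℂ) (v : CVec p d) (φ : Mdl p d → ℂ) (u : Mdl p d) :
    derivVec (c • v) φ u = c * derivVec v φ u := by
  simp only [derivVec, Prod.smul_fst, Prod.smul_snd, Pi.smul_apply, smul_eq_mul,
    Finset.mul_sum, mul_add, mul_assoc]

lemma derivVec_zero_vec (φ : Mdl p d → ℂ) (u : Mdl p d) :
    derivVec (0 : CVec p d) φ u = 0 := by
  simp [derivVec]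

lemma derivVec_sum_vec {ι : Type*} (s : Finset ι) (w : ι → CVec p d)
    (φ : Mdl p d → ℂ) (u : Mdl p d) :
    derivVec (∑ l ∈ s, w l) φ u = ∑ l ∈ s, derivVec (w l) φ u := by
  classical
  induction s using Finset.induction_on with
  | empty => simp [derivVec_zero_vec]
  | insert _ _ h ih =>
    rw [Finset.sum_insert h, derivVec_add_vec, ih, Finset.sum_insert h]

lemma fderiv_conj_apply {E : Type*} [NormedAddCommGroup E] [NormedSpace ℝ E]
    {φ : E → ℂ} {u : E} (h : DifferentiableAt ℝ φ u) (w : E) :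
    fderiv ℝ (fun x => (starRingEnd ℂ) (φ x)) u w = (starRingEnd ℂ) (fderiv ℝ φ u w) := by
  have h2 : HasFDerivAt (fun x => (starRingEnd ℂ) (φ x))
      ((Complex.conjCLE.toContinuousLinearMap).comp (fderiv ℝ φ u)) u :=
    (Complex.conjCLE.toContinuousLinearMap.hasFDerivAt).comp u h.hasFDerivAt
  rw [h2.fderiv]; simp

lemma pdz_conj {i : Fin p} {φ : Mdl p d → ℂ} {u : Mdl p d}
    (h : DifferentiableAt ℝ φ u) :
    pdz i (fun x => (starRingEnd ℂ) (φ x)) u = (starRingEnd ℂ) (pdzbar i φ u) := by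
  simp only [pdz, pdzbar, fderiv_conj_apply h, map_mul, map_add, map_sub, Complex.conj_I]
  have : (starRingEnd ℂ) (1/2 : ℂ) = 1/2 := by rw [map_div₀, map_one, map_ofNat]
  rw [this]; ring

lemma pdt_conj {l : Fin d} {φ : Mdl p d → ℂ} {u : Mdl p d}
    (h : DifferentiableAt ℝ φ u) :
    pdt l (fun x => (starRingEnd ℂ) (φ x)) u = (starRingEnd ℂ) (pdt l φ u) := by
  simp only [pdt, fderiv_conj_apply h]

lemma derivVec_conj_frame (a : Fin p → Fin d → Mdl p d → ℂ) (k : Fin p)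
    {φ : Mdl p d → ℂ} {u : Mdl p d} (h : DifferentiableAt ℝ φ u) :
    derivVec (eBarFrame a k u) (fun x => (starRingEnd ℂ) (φ x)) u
      = (starRingEnd ℂ) (derivVec (eFrame a k u) φ u) := by
  simp only [derivVec, eBarFrame, eFrame, Pi.zero_apply, zero_mul,
    Finset.sum_const_zero, add_zero, zero_add, map_add, map_sum, map_mul,
    pdz_conj h, pdt_conj h, Pi.single_apply, ite_mul, one_mul, zero_mul,
    Finset.sum_ite_eq', Finset.mem_univ, if_true]

/-! ### Component lemmas -/

/-- The auxiliary field `W_i = Σ_l ω_{il} ē_l`. -/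
def Wf (a : Fin p → Fin d → Mdl p d → ℂ) (ω : Fin p → Fin p → Mdl p d → ℂ)
    (i : Fin p) : CVF p d :=
  fun v => ∑ l, ω i l v • eBarFrame a l v

variable (a : Fin p → Fin d → Mdl p d → ℂ) (ω : Fin p → Fin p → Mdl p d → ℂ)

lemma sum_smul_comp1 (c : Fin p → ℂ) (w : Fin p → CVec p d) (k : Fin p) :
    (∑ l, c l • w l).1 k = ∑ l, c l * (w l).1 k := by
  simp [Prod.fst_sum, Finset.sum_apply]

lemma sum_smul_comp21 (c : Fin p → ℂ) (w : Fin p → CVec p d) (k : Fin p) :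
    (∑ l, c l • w l).2.1 k = ∑ l, c l * (w l).2.1 k := by
  simp [Prod.snd_sum, Prod.fst_sum, Finset.sum_apply]

lemma sum_smul_comp3 (c : Fin p → ℂ) (w : Fin p → CVec p d) (m : Fin d) :
    (∑ l, c l • w l).2.2 m = ∑ l, c l * (w l).2.2 m := by
  simp [Prod.snd_sum, Finset.sum_apply]

lemma sumF_comp1 (c : Fin p → ℂ) (u : Mdl p d) (k : Fin p) :
    (∑ l, c l • eBarFrame a l u).1 k = c k := by
  rw [sum_smul_comp1]
  simp [eBarFrame, Pi.single_apply, Finset.sum_ite_eq]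

lemma sumF_comp21 (c : Fin p → ℂ) (u : Mdl p d) (k : Fin p) :
    (∑ l, c l • eBarFrame a l u).2.1 k = 0 := by
  rw [sum_smul_comp21]
  simp [eBarFrame]

lemma sumF_comp3 (c : Fin p → ℂ) (u : Mdl p d) (m : Fin d) :
    (∑ l, c l • eBarFrame a l u).2.2 m = ∑ l, c l * conj (a l m u) := by
  rw [sum_smul_comp3]
  simp [eBarFrame]

lemma bracket_comp1 (X Y : CVF p d) (u : Mdl p d) (k : Fin p) :
    (bracket X Y u).1 k = derivVec (X u) (fun v => (Y v).1 k) u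
      - derivVec (Y u) (fun v => (X v).1 k) u := rfl

lemma bracket_comp21 (X Y : CVF p d) (u : Mdl p d) (k : Fin p) :
    (bracket X Y u).2.1 k = derivVec (X u) (fun v => (Y v).2.1 k) u
      - derivVec (Y u) (fun v => (X v).2.1 k) u := rfl

lemma bracket_comp3 (X Y : CVF p d) (u : Mdl p d) (m : Fin d) :
    (bracket X Y u).2.2 m = derivVec (X u) (fun v => (Y v).2.2 m) u
      - derivVec (Y u) (fun v => (X v).2.2 m) u := rfl

lemma Wf_comp1 (i k : Fin p) : (fun v => (Wf a ω i v).1 k) = ω i k := by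
  funext v; exact sumF_comp1 a (fun l => ω i l v) v k

lemma Wf_comp21 (i k : Fin p) : (fun v => (Wf a ω i v).2.1 k) = fun _ => (0 : ℂ) := by
  funext v; exact sumF_comp21 a (fun l => ω i l v) v k

lemma Wf_comp3 (i : Fin p) (m : Fin d) :
    (fun v => (Wf a ω i v).2.2 m) = fun v => ∑ l, ω i l v * conj (a l m v) := by
  funext v; exact sumF_comp3 a (fun l => ω i l v) v m

lemma P_comp1 (i k : Fin p) :
    (fun v => (defCT a ω i v).1 k) = fun v => -(ω i k v) := by
  funext v
  have : (defCT a ω i v).1 k = (eFrame a i v).1 k - (∑ j, ω i j v • eBarFrame a j v).1 k := rfl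
  rw [this, sumF_comp1]
  simp [eFrame]

lemma P_comp21 (i k : Fin p) :
    (fun v => (defCT a ω i v).2.1 k) = fun _ : Mdl p d => (Pi.single i 1 : Fin p → ℂ) k := by
  funext v
  have : (defCT a ω i v).2.1 k
      = (eFrame a i v).2.1 k - (∑ j, ω i j v • eBarFrame a j v).2.1 k := rfl
  rw [this, sumF_comp21]
  simp [eFrame]

lemma P_comp3 (i : Fin p) (m : Fin d) :
    (fun v => (defCT a ω i v).2.2 m)
      = fun v => a i m v - ∑ l, ω i l v * conj (a l m v) := by
  funext v
  have : (defCT a ω i v).2.2 m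
      = (eFrame a i v).2.2 m - (∑ j, ω i j v • eBarFrame a j v).2.2 m := rfl
  rw [this, sumF_comp3]
  rfl

lemma P_val (i : Fin p) (u : Mdl p d) :
    defCT a ω i u = eFrame a i u - Wf a ω i u := rfl

lemma W_val (i : Fin p) (u : Mdl p d) :
    Wf a ω i u = ∑ l, ω i l u • eBarFrame a l u := rfl

lemma fE1 (j k : Fin p) : (fun v => (eFrame a j v).1 k) = fun _ : Mdl p d => (0 : ℂ) := rfl
lemma fE21 (j k : Fin p) :
    (fun v => (eFrame a j v).2.1 k) = fun _ : Mdl p d => (Pi.single j 1 : Fin p → ℂ) k := rfl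
lemma fE3 (j : Fin p) (m : Fin d) : (fun v => (eFrame a j v).2.2 m) = a j m := rfl
lemma fF1 (k' k : Fin p) :
    (fun v => (eBarFrame a k' v).1 k) = fun _ : Mdl p d => (Pi.single k' 1 : Fin p → ℂ) k := rfl
lemma fF21 (k' k : Fin p) : (fun v => (eBarFrame a k' v).2.1 k) = fun _ : Mdl p d => (0 : ℂ) := rfl
lemma fF3 (k' : Fin p) (m : Fin d) :
    (fun v => (eBarFrame a k' v).2.2 m) = fun v => conj (a k' m v) := rfl

lemma brEF_comp1 (j k' : Fin p) (u : Mdl p d) (k : Fin p) :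
    (bracket (eFrame a j) (eBarFrame a k') u).1 k = 0 := by
  rw [bracket_comp1, fF1, fE1, derivVec_const, derivVec_const, sub_zero]

lemma brEF_comp21 (j k' : Fin p) (u : Mdl p d) (k : Fin p) :
    (bracket (eFrame a j) (eBarFrame a k') u).2.1 k = 0 := by
  rw [bracket_comp21, fF21, fE21, derivVec_const, derivVec_const, sub_zero]

lemma brEF_comp3 (j k' : Fin p) (u : Mdl p d) (m : Fin d) :
    (bracket (eFrame a j) (eBarFrame a k') u).2.2 m
      = derivVec (eFrame a j u) (fun v => conj (a k' m v)) u
        - derivVec (eBarFrame a k' u) (a j m) u := by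
  rw [bracket_comp3, fF3, fE3]


lemma derivAlong_def (X : CVF p d) (φ : Mdl p d → ℂ) (u : Mdl p d) :
    derivAlong X φ u = derivVec (X u) φ u := rfl

section Point

variable {u : Mdl p d}
variable (hda : ∀ i l, DifferentiableAt ℝ (a i l) u)
variable (hdω : ∀ i j, DifferentiableAt ℝ (ω i j) u)
variable (heeu : ∀ i j, bracket (eFrame a i) (eFrame a j) u = 0)

include hda in
lemma hdca : ∀ l m, DifferentiableAt ℝ (fun v => conj (a l m v)) u :=
  fun l m => (hda l m).star

include hda hdω in
lemma hdB : ∀ j' m, DifferentiableAt ℝ (fun v => ∑ l, ω j' l v * conj (a l m v)) u :=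
  fun j' m => DifferentiableAt.fun_sum (fun l _ => (hdω j' l).mul (hdca a hda l m))

lemma dW (i' : Fin p) (φ : Mdl p d → ℂ) :
    derivVec (Wf a ω i' u) φ u
      = ∑ k', ω i' k' u * derivVec (eBarFrame a k' u) φ u := by
  rw [W_val, derivVec_sum_vec]
  exact Finset.sum_congr rfl fun k' _ => derivVec_smul_vec _ _ _ _

include hda hdω in
lemma dB (v : CVec p d) (j' : Fin p) (m' : Fin d) :
    derivVec v (fun x => ∑ l, ω j' l x * conj (a l m' x)) u
      = ∑ l, (derivVec v (ω j' l) u * conj (a l m' u)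
          + ω j' l u * derivVec v (fun x => conj (a l m' x)) u) := by
  rw [derivVec_fsum v Finset.univ (fun l _ => (hdω j' l).fun_mul (hdca a hda l m'))]
  exact Finset.sum_congr rfl fun l _ => by
    rw [derivVec_mul v (hdω j' l) (hdca a hda l m')]; ring

include heeu in
lemma heeEE (k l : Fin p) (m' : Fin d) :
    derivVec (eFrame a k u) (a l m') u = derivVec (eFrame a l u) (a k m') u := by
  have h1 : (bracket (eFrame a k) (eFrame a l) u).2.2 m' = (0 : CVec p d).2.2 m' :=
    congrArg (fun z : CVec p d => z.2.2 m') (heeu k l)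
  rw [bracket_comp3, fE3, fE3] at h1
  simpa [sub_eq_zero] using h1

include hda heeu in
lemma symCA (k l : Fin p) (m' : Fin d) :
    derivVec (eBarFrame a k u) (fun v => conj (a l m' v)) u
      = derivVec (eBarFrame a l u) (fun v => conj (a k m' v)) u := by
  rw [derivVec_conj_frame a k (hda l m'), derivVec_conj_frame a l (hda k m'),
    heeEE a heeu k l m']

include hda hdω in
lemma hEB (i' j' : Fin p) (m' : Fin d) :
    derivVec (eFrame a i' u) (fun x => ∑ l, ω j' l x * conj (a l m' x)) u
      = (∑ l, derivVec (eFrame a i' u) (ω j' l) u * conj (a l m' u))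
        + ∑ l, ω j' l u * derivVec (eFrame a i' u) (fun x => conj (a l m' x)) u := by
  rw [dB a ω hda hdω _ j' m', Finset.sum_add_distrib]

include hda hdω in
lemma hWB (i' j' : Fin p) (m' : Fin d) :
    derivVec (Wf a ω i' u) (fun x => ∑ l, ω j' l x * conj (a l m' x)) u
      = (∑ l, derivVec (Wf a ω i' u) (ω j' l) u * conj (a l m' u))
        + ∑ l, ω j' l u
            * (∑ k, ω i' k u * derivVec (eBarFrame a k u) (fun x => conj (a l m' x)) u) := by
  rw [dB a ω hda hdω _ j' m', Finset.sum_add_distrib]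
  congr 1
  exact Finset.sum_congr rfl fun l _ => by rw [dW]

lemma point_key (i j : Fin p)
    (hda : ∀ i l, DifferentiableAt ℝ (a i l) u)
    (hdω : ∀ i j, DifferentiableAt ℝ (ω i j) u)
    (heeu : ∀ i j, bracket (eFrame a i) (eFrame a j) u = 0) :
    bracket (defCT a ω i) (defCT a ω j) u =
      ((∑ l, (derivAlong (eFrame a j) (ω i l) u
          - derivAlong (eFrame a i) (ω j l) u) • eBarFrame a l u)
        + bracket (Wf a ω i) (Wf a ω j) u)
      + ((∑ k, ω i k u • bracket (eFrame a j) (eBarFrame a k) u)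
        - ∑ k, ω j k u • bracket (eFrame a i) (eBarFrame a k) u) := by
  refine Prod.ext (funext fun k => ?_) (Prod.ext (funext fun k => ?_) (funext fun m => ?_))
  · -- dz component
    have hL : (bracket (defCT a ω i) (defCT a ω j) u).1 k
        = -(derivVec (eFrame a i u) (ω j k) u - derivVec (Wf a ω i u) (ω j k) u)
          - -(derivVec (eFrame a j u) (ω i k) u - derivVec (Wf a ω j u) (ω i k) u) := by
      rw [bracket_comp1, P_comp1 a ω j k, P_comp1 a ω i k, derivVec_neg, derivVec_neg,
        P_val, P_val, derivVec_sub_vec, derivVec_sub_vec]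
    rw [hL]
    have hR1 : ((∑ l, (derivAlong (eFrame a j) (ω i l) u
        - derivAlong (eFrame a i) (ω j l) u) • eBarFrame a l u)).1 k
        = derivVec (eFrame a j u) (ω i k) u - derivVec (eFrame a i u) (ω j k) u :=
      sumF_comp1 a _ u k
    have hR2 : (bracket (Wf a ω i) (Wf a ω j) u).1 k
        = derivVec (Wf a ω i u) (ω j k) u - derivVec (Wf a ω j u) (ω i k) u := by
      rw [bracket_comp1, Wf_comp1, Wf_comp1]
    have hR3 : (∑ k', ω i k' u • bracket (eFrame a j) (eBarFrame a k') u).1 k = 0 := by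
      rw [sum_smul_comp1]
      simp [brEF_comp1]
    have hR4 : (∑ k', ω j k' u • bracket (eFrame a i) (eBarFrame a k') u).1 k = 0 := by
      rw [sum_smul_comp1]
      simp [brEF_comp1]
    show _ = ((_ + _) + (_ - _) : CVec p d).1 k
    simp only [Prod.fst_add, Prod.fst_sub, Pi.add_apply, Pi.sub_apply, hR1, hR2, hR3, hR4]
    ring
  · -- dz̄ component
    have hL : (bracket (defCT a ω i) (defCT a ω j) u).2.1 k = 0 := by
      rw [bracket_comp21, P_comp21 a ω j k, P_comp21 a ω i k, derivVec_const, derivVec_const,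
        sub_zero]
    have hR2 : (bracket (Wf a ω i) (Wf a ω j) u).2.1 k = 0 := by
      rw [bracket_comp21, Wf_comp21, Wf_comp21, derivVec_const, derivVec_const, sub_zero]
    have hR3 : (∑ k', ω i k' u • bracket (eFrame a j) (eBarFrame a k') u).2.1 k = 0 := by
      rw [sum_smul_comp21]; simp [brEF_comp21]
    have hR4 : (∑ k', ω j k' u • bracket (eFrame a i) (eBarFrame a k') u).2.1 k = 0 := by
      rw [sum_smul_comp21]; simp [brEF_comp21]
    show _ = ((_ + _) + (_ - _) : CVec p d).2.1 k
    simp only [Prod.snd_add, Prod.fst_add, Prod.snd_sub, Prod.fst_sub, Pi.add_apply,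
      Pi.sub_apply, hL, hR2, hR3, hR4, sumF_comp21]
    ring
  · -- dt component
    have hL : (bracket (defCT a ω i) (defCT a ω j) u).2.2 m
        = ((derivVec (eFrame a i u) (a j m) u
              - ∑ k, ω i k u * derivVec (eBarFrame a k u) (a j m) u)
            - (derivVec (eFrame a i u) (fun x => ∑ l, ω j l x * conj (a l m x)) u
              - derivVec (Wf a ω i u) (fun x => ∑ l, ω j l x * conj (a l m x)) u))
          - ((derivVec (eFrame a j u) (a i m) u
              - ∑ k, ω j k u * derivVec (eBarFrame a k u) (a i m) u)
            - (derivVec (eFrame a j u) (fun x => ∑ l, ω i l x * conj (a l m x)) u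
              - derivVec (Wf a ω j u) (fun x => ∑ l, ω i l x * conj (a l m x)) u)) := by
      rw [bracket_comp3, P_comp3 a ω j m, P_comp3 a ω i m,
        derivVec_sub _ (hda j m) (hdB a ω hda hdω j m),
        derivVec_sub _ (hda i m) (hdB a ω hda hdω i m),
        P_val, P_val, derivVec_sub_vec, derivVec_sub_vec, derivVec_sub_vec, derivVec_sub_vec,
        dW a ω i (a j m), dW a ω j (a i m)]
    rw [hL, hEB a ω hda hdω i j m, hEB a ω hda hdω j i m,
      hWB a ω hda hdω i j m, hWB a ω hda hdω j i m]
    have hR1 : ((∑ l, (derivAlong (eFrame a j) (ω i l) u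
        - derivAlong (eFrame a i) (ω j l) u) • eBarFrame a l u)).2.2 m
        = (∑ l, derivVec (eFrame a j u) (ω i l) u * conj (a l m u))
          - ∑ l, derivVec (eFrame a i u) (ω j l) u * conj (a l m u) := by
      rw [sumF_comp3]
      simp only [derivAlong_def, sub_mul, Finset.sum_sub_distrib]
    have hR2 : (bracket (Wf a ω i) (Wf a ω j) u).2.2 m
        = (((∑ l, derivVec (Wf a ω i u) (ω j l) u * conj (a l m u))
            + ∑ l, ω j l u
                * (∑ k, ω i k u * derivVec (eBarFrame a k u) (fun x => conj (a l m x)) u))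
          - (((∑ l, derivVec (Wf a ω j u) (ω i l) u * conj (a l m u))
            + ∑ l, ω i l u
                * (∑ k, ω j k u * derivVec (eBarFrame a k u) (fun x => conj (a l m x)) u)))) := by
      rw [bracket_comp3, Wf_comp3, Wf_comp3, hWB a ω hda hdω i j m, hWB a ω hda hdω j i m]
    have hR3 : (∑ k, ω i k u • bracket (eFrame a j) (eBarFrame a k) u).2.2 m
        = (∑ k, ω i k u * derivVec (eFrame a j u) (fun x => conj (a k m x)) u)
          - ∑ k, ω i k u * derivVec (eBarFrame a k u) (a j m) u := by
      rw [sum_smul_comp3, ← Finset.sum_sub_distrib]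
      exact Finset.sum_congr rfl fun k _ => by rw [brEF_comp3]; ring
    have hR4 : (∑ k, ω j k u • bracket (eFrame a i) (eBarFrame a k) u).2.2 m
        = (∑ k, ω j k u * derivVec (eFrame a i u) (fun x => conj (a k m x)) u)
          - ∑ k, ω j k u * derivVec (eBarFrame a k u) (a i m) u := by
      rw [sum_smul_comp3, ← Finset.sum_sub_distrib]
      exact Finset.sum_congr rfl fun k _ => by rw [brEF_comp3]; ring
    show _ = ((_ + _) + (_ - _) : CVec p d).2.2 m
    simp only [Prod.snd_add, Prod.snd_sub, Pi.add_apply, Pi.sub_apply, hR1, hR2, hR3, hR4]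
    rw [heeEE a heeu i j m]
    have hswap1 : (∑ l, ω j l u * derivVec (eFrame a i u) (fun x => conj (a l m x)) u)
        = ∑ k, ω j k u * derivVec (eFrame a i u) (fun x => conj (a k m x)) u := rfl
    have hswap2 : (∑ l, ω i l u * derivVec (eFrame a j u) (fun x => conj (a l m x)) u)
        = ∑ k, ω i k u * derivVec (eFrame a j u) (fun x => conj (a k m x)) u := rfl
    ring


lemma point_split (i j : Fin p)
    (hda : ∀ i l, DifferentiableAt ℝ (a i l) u)
    (hdω : ∀ i j, DifferentiableAt ℝ (ω i j) u)
    (heeu : ∀ i j, bracket (eFrame a i) (eFrame a j) u = 0)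
    (h0 : bracket (defCT a ω i) (defCT a ω j) u = 0) :
    ((∑ l, (derivAlong (eFrame a j) (ω i l) u
        - derivAlong (eFrame a i) (ω j l) u) • eBarFrame a l u)
      + bracket (Wf a ω i) (Wf a ω j) u = 0)
    ∧ ((∑ k, ω i k u • bracket (eFrame a j) (eBarFrame a k) u)
        = ∑ k, ω j k u • bracket (eFrame a i) (eBarFrame a k) u) := by
  have hkey := point_key a ω i j hda hdω heeu
  rw [h0] at hkey
  set A := (∑ l, (derivAlong (eFrame a j) (ω i l) u
      - derivAlong (eFrame a i) (ω j l) u) • eBarFrame a l u)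
    + bracket (Wf a ω i) (Wf a ω j) u with hAdef
  set B := (∑ k, ω i k u • bracket (eFrame a j) (eBarFrame a k) u)
    - ∑ k, ω j k u • bracket (eFrame a i) (eBarFrame a k) u with hBdef
  have hB1 : ∀ k, B.1 k = 0 := by
    intro k
    rw [hBdef, Prod.fst_sub, Pi.sub_apply, sum_smul_comp1, sum_smul_comp1]
    simp [brEF_comp1]
  have hB21 : ∀ k, B.2.1 k = 0 := by
    intro k
    rw [hBdef, Prod.snd_sub, Prod.fst_sub, Pi.sub_apply, sum_smul_comp21, sum_smul_comp21]
    simp [brEF_comp21]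
  have hA1 : ∀ k, A.1 k = 0 := by
    intro k
    have h := congrArg (fun z : CVec p d => z.1 k) hkey
    simp only [Prod.fst_add, Pi.add_apply, Prod.fst_zero, Pi.zero_apply] at h
    rw [hB1 k, add_zero] at h
    exact h.symm
  have hA21 : ∀ k, A.2.1 k = 0 := by
    intro k
    rw [hAdef, Prod.snd_add, Prod.fst_add, Pi.add_apply, sumF_comp21, bracket_comp21,
      Wf_comp21, Wf_comp21, derivVec_const, derivVec_const]
    ring
  have hA1c : ∀ k, (derivVec (eFrame a j u) (ω i k) u - derivVec (eFrame a i u) (ω j k) u)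
      + (derivVec (Wf a ω i u) (ω j k) u - derivVec (Wf a ω j u) (ω i k) u) = 0 := by
    intro k
    have h := hA1 k
    rw [hAdef, Prod.fst_add, Pi.add_apply, sumF_comp1, bracket_comp1, Wf_comp1, Wf_comp1] at h
    simpa [derivAlong_def] using h
  have hA3 : ∀ m, A.2.2 m = 0 := by
    intro m
    have hAm : A.2.2 m
        = (∑ l, ((derivVec (eFrame a j u) (ω i l) u - derivVec (eFrame a i u) (ω j l) u)
            + (derivVec (Wf a ω i u) (ω j l) u - derivVec (Wf a ω j u) (ω i l) u))
              * conj (a l m u))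
          + ((∑ l, ω j l u
                * (∑ k, ω i k u * derivVec (eBarFrame a k u) (fun x => conj (a l m x)) u))
            - ∑ l, ω i l u
                * (∑ k, ω j k u * derivVec (eBarFrame a k u) (fun x => conj (a l m x)) u)) := by
      rw [hAdef, Prod.snd_add, Prod.snd_add, Pi.add_apply, sumF_comp3, bracket_comp3,
        Wf_comp3, Wf_comp3, hWB a ω hda hdω i j m, hWB a ω hda hdω j i m]
      simp only [derivAlong_def, add_mul, sub_mul, Finset.sum_add_distrib,
        Finset.sum_sub_distrib]
      ring
    rw [hAm]
    have h1 : (∑ l, ((derivVec (eFrame a j u) (ω i l) u - derivVec (eFrame a i u) (ω j l) u)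
        + (derivVec (Wf a ω i u) (ω j l) u - derivVec (Wf a ω j u) (ω i l) u))
          * conj (a l m u)) = 0 :=
      Finset.sum_eq_zero fun l _ => by rw [hA1c l, zero_mul]
    have h2 : (∑ l, ω j l u
          * (∑ k, ω i k u * derivVec (eBarFrame a k u) (fun x => conj (a l m x)) u))
        = ∑ l, ω i l u
          * (∑ k, ω j k u * derivVec (eBarFrame a k u) (fun x => conj (a l m x)) u) := by
      calc (∑ l, ω j l u
            * (∑ k, ω i k u * derivVec (eBarFrame a k u) (fun x => conj (a l m x)) u))
          = ∑ l, ∑ k, ω i k u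
              * (ω j l u * derivVec (eBarFrame a l u) (fun x => conj (a k m x)) u) := by
            refine Finset.sum_congr rfl fun l _ => ?_
            rw [Finset.mul_sum]
            refine Finset.sum_congr rfl fun k _ => ?_
            rw [symCA a hda heeu k l m]; ring
        _ = ∑ k, ∑ l, ω i k u
              * (ω j l u * derivVec (eBarFrame a l u) (fun x => conj (a k m x)) u) :=
            Finset.sum_comm
        _ = ∑ l, ω i l u
              * (∑ k, ω j k u * derivVec (eBarFrame a k u) (fun x => conj (a l m x)) u) := by
            refine Finset.sum_congr rfl fun k _ => ?_
            rw [Finset.mul_sum]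
    rw [h1, h2]
    ring
  have hA : A = 0 := by
    refine Prod.ext (funext fun k => ?_) (Prod.ext (funext fun k => ?_) (funext fun m => ?_))
    · simpa using hA1 k
    · simpa using hA21 k
    · simpa using hA3 m
  have hB : B = 0 := by
    rw [hA, zero_add] at hkey
    exact hkey.symm
  refine ⟨hA, ?_⟩
  rw [hBdef] at hB
  exact sub_eq_zero.mp hB

end Point

end Aux

/-- Proposition 6.1 (ii) of the paper, local form.
The family `{e_1', …, e_p'}` is involutive on `U` if and only if
`Σ_l ((e_j·ω_{il}) − (e_i·ω_{jl})) ē_l + [Σ_l ω_{il} ē_l, Σ_l ω_{jl} ē_l] = 0`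
(formula (6.2)) and `Σ_k ω_{ik}[e_j, ē_k] = Σ_k ω_{jk}[e_i, ē_k]`
(formula (6.4)) on `U`. -/
theorem statement12 (p d : ℕ) (hp : 1 ≤ p) (hd : 1 ≤ d)
    (U : Set (Mdl p d)) (hU : IsOpen U)
    (a : Fin p → Fin d → Mdl p d → ℂ)
    (ha : ∀ i l, ContDiffOn ℝ (⊤ : ℕ∞) (a i l) U)
    (ω : Fin p → Fin p → Mdl p d → ℂ)
    (hω : ∀ i j, ContDiffOn ℝ (⊤ : ℕ∞) (ω i j) U)
    -- the canonical frames of a completely integrable CR polarized structure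
    (hee : ∀ i j : Fin p, ∀ u ∈ U, bracket (eFrame a i) (eFrame a j) u = 0) :
    InvolutiveOn (defCT a ω) U ↔
      ((∀ i j : Fin p, ∀ u ∈ U,
         (∑ l, (derivAlong (eFrame a j) (ω i l) u
             - derivAlong (eFrame a i) (ω j l) u) • eBarFrame a l u)
         + bracket (fun v => ∑ l, ω i l v • eBarFrame a l v)
             (fun v => ∑ l, ω j l v • eBarFrame a l v) u = 0) ∧
       (∀ i j : Fin p, ∀ u ∈ U,
         (∑ k, ω i k u • bracket (eFrame a j) (eBarFrame a k) u)
           = ∑ k, ω j k u • bracket (eFrame a i) (eBarFrame a k) u)) := by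
    classical
  have hda : ∀ u ∈ U, ∀ i l, DifferentiableAt ℝ (a i l) u := fun u hu i l =>
    ((ha i l).contDiffAt (hU.mem_nhds hu)).differentiableAt (by simp)
  have hdω : ∀ u ∈ U, ∀ i j, DifferentiableAt ℝ (ω i j) u := fun u hu i j =>
    ((hω i j).contDiffAt (hU.mem_nhds hu)).differentiableAt (by simp)
  have hiff : InvolutiveOn (defCT a ω) U
      ↔ ∀ i j : Fin p, ∀ u ∈ U, bracket (defCT a ω i) (defCT a ω j) u = 0 := by
    constructor
    · intro hInv i j u hu
      obtain ⟨c, hc⟩ := (Submodule.mem_span_range_iff_exists_fun (R := ℂ)).mp (hInv i j u hu)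
      have hbr21 : ∀ k, (bracket (defCT a ω i) (defCT a ω j) u).2.1 k = 0 := by
        intro k
        rw [bracket_comp21, P_comp21 a ω j k, P_comp21 a ω i k, derivVec_const,
          derivVec_const, sub_zero]
      have hc21 : ∀ k, c k = (bracket (defCT a ω i) (defCT a ω j) u).2.1 k := by
        intro k
        have h := congrArg (fun z : CVec p d => z.2.1 k) hc
        have h2 : (∑ k', c k' • defCT a ω k' u).2.1 k = c k := by
          rw [sum_smul_comp21]
          have h3 : ∀ k', (defCT a ω k' u).2.1 k = (Pi.single k' 1 : Fin p → ℂ) k := fun k' =>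
            congrFun (P_comp21 a ω k' k) u
          calc (∑ k', c k' * (defCT a ω k' u).2.1 k)
              = ∑ k', c k' * (Pi.single k' 1 : Fin p → ℂ) k :=
                Finset.sum_congr rfl fun k' _ => by rw [h3 k']
            _ = c k := by simp [Pi.single_apply, Finset.sum_ite_eq]
        rw [← h2]
        exact h
      have hc0 : ∀ k, c k = 0 := fun k => (hc21 k).trans (hbr21 k)
      rw [← hc]
      exact Finset.sum_eq_zero fun k _ => by rw [hc0 k, zero_smul]
    · intro h i j u hu
      rw [h i j u hu]
      exact Submodule.zero_mem _
  rw [hiff]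
  constructor
  · intro h
    constructor
    · intro i j u hu
      exact (point_split a ω i j (hda u hu) (hdω u hu) (fun i' j' => hee i' j' u hu)
        (h i j u hu)).1
    · intro i j u hu
      exact (point_split a ω i j (hda u hu) (hdω u hu) (fun i' j' => hee i' j' u hu)
        (h i j u hu)).2
  · rintro ⟨h62, h64⟩ i j u hu
    rw [point_key a ω i j (hda u hu) (hdω u hu) (fun i' j' => hee i' j' u hu)]
    have h1 : (∑ l, (derivAlong (eFrame a j) (ω i l) u
        - derivAlong (eFrame a i) (ω j l) u) • eBarFrame a l u)
        + bracket (Wf a ω i) (Wf a ω j) u = 0 := h62 i j u hu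
    have h2 : (∑ k, ω i k u • bracket (eFrame a j) (eBarFrame a k) u)
        = ∑ k, ω j k u • bracket (eFrame a i) (eBarFrame a k) u := h64 i j u hu
    rw [h1, h2]
    simp
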